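/- For every n ≥ 3, every S ∈ F_n, and every S-admissible set B, the cardinality of B equals |S ∩ A_n| + (n+1) − |S ∩ (S+4)|, where S+4 = {a+4 : a ∈ S}. -/
import Mathlib


open MvPolynomial

/-- The variable `x_i` of `ℂ[x₁,…,x_{2n+1}]`, for `1 ≤ i ≤ 2n+1`
(indices are shifted into `Fin (2n+1)`). -/
noncomputable def xv (n i : ℕ) : MvPolynomial (Fin (2 * n + 1)) ℂ :=
  X ⟨(i - 1) % (2 * n + 1), Nat.mod_lt _ (by omega)⟩

/-- The polynomial `p_a = x_{a-2} x_{a-1} + x_{a+1} x_{a+2}`. -/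
noncomputable def pv (n a : ℕ) : MvPolynomial (Fin (2 * n + 1)) ℂ :=
  xv n (a - 2) * xv n (a - 1) + xv n (a + 1) * xv n (a + 2)

/-- `A'_n = {3, 5, 7, …, 2n−1}`, the odd numbers between `3` and `2n−1`. -/
def Aset' (n : ℕ) : Finset ℕ :=
  (Finset.range (2 * n)).filter (fun a => a % 2 = 1 ∧ 3 ≤ a)

/-- `A_n = A'_n \ {3, 2n−1}`. -/
def Aset (n : ℕ) : Finset ℕ :=
  (Aset' n).filter (fun a => a ≠ 3 ∧ a ≠ 2 * n - 1)

/-- `S` is a Fibonacci subset of `A'_n`: for every `1 ≤ j ≤ n−2`,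
`2j+1 ∈ S` or `2j+3 ∈ S`. -/
def IsFib (n : ℕ) (S : Finset ℕ) : Prop :=
  S ⊆ Aset' n ∧ ∀ j, 1 ≤ j → j ≤ n - 2 → (2 * j + 1 ∈ S ∨ 2 * j + 3 ∈ S)

/-- `U1 = {x_i : i ∈ S}`. -/
noncomputable def U1 (n : ℕ) (S : Finset ℕ) : Finset (MvPolynomial (Fin (2 * n + 1)) ℂ) :=
  S.image (xv n)

/-- The allowable choices of `U2`. -/
def U2ok (n : ℕ) (S : Finset ℕ) (U : Finset (MvPolynomial (Fin (2 * n + 1)) ℂ)) : Prop :=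
  (3 ∉ S ∧ 5 ∈ S ∧ U = {xv n 1, xv n 2}) ∨
  (3 ∈ S ∧ 5 ∈ S ∧ (U = {xv n 1} ∨ U = {xv n 2})) ∨
  (3 ∈ S ∧ 5 ∉ S ∧ U = {pv n 3})

/-- The allowable choices of `U3`. -/
def U3ok (n : ℕ) (S : Finset ℕ) (U : Finset (MvPolynomial (Fin (2 * n + 1)) ℂ)) : Prop :=
  (2 * n - 1 ∉ S ∧ 2 * n - 3 ∈ S ∧ U = {xv n (2 * n), xv n (2 * n + 1)}) ∨
  (2 * n - 3 ∈ S ∧ 2 * n - 1 ∈ S ∧ (U = {xv n (2 * n)} ∨ U = {xv n (2 * n + 1)})) ∨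
  (2 * n - 1 ∈ S ∧ 2 * n - 3 ∉ S ∧ U = {pv n (2 * n - 1)})

/-- The contribution `T_a` to `U4` for `a ∈ A_n`. -/
noncomputable def Tpart (n : ℕ) (S : Finset ℕ) (a : ℕ) :
    Finset (MvPolynomial (Fin (2 * n + 1)) ℂ) :=
  if a - 2 ∈ S then (if a + 2 ∈ S then ∅ else {xv n (a + 1)})
  else (if a + 2 ∈ S then {xv n (a - 1)} else {pv n a})

/-- `U4 = ⋃_{a ∈ A_n} T_a`. -/
noncomputable def U4 (n : ℕ) (S : Finset ℕ) : Finset (MvPolynomial (Fin (2 * n + 1)) ℂ) :=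
  (Aset n).biUnion (Tpart n S)

/-- `B` is an `S`-admissible set: `B = U1 ∪ U2 ∪ U3 ∪ U4` for some allowable `U2, U3`. -/
def IsAdmissible (n : ℕ) (S : Finset ℕ) (B : Finset (MvPolynomial (Fin (2 * n + 1)) ℂ)) :
    Prop :=
  ∃ U2 U3, U2ok n S U2 ∧ U3ok n S U3 ∧ B = U1 n S ∪ U2 ∪ U3 ∪ U4 n S

def idx (n i : ℕ) : Fin (2 * n + 1) := ⟨(i - 1) % (2 * n + 1), Nat.mod_lt _ (by omega)⟩

lemma xv_def (n i : ℕ) : xv n i = X (idx n i) := rfl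

lemma idx_eq_iff (n i j : ℕ) (hi : 1 ≤ i) (hi' : i ≤ 2*n+1) (hj : 1 ≤ j) (hj' : j ≤ 2*n+1) :
    idx n i = idx n j ↔ i = j := by
  simp only [idx, Fin.mk.injEq]
  rw [Nat.mod_eq_of_lt (by omega), Nat.mod_eq_of_lt (by omega)]
  omega

lemma xv_inj (n i j : ℕ) (hi : 1 ≤ i) (hi' : i ≤ 2*n+1) (hj : 1 ≤ j) (hj' : j ≤ 2*n+1)
    (h : xv n i = xv n j) : i = j := by
  rw [xv_def, xv_def] at h
  have := MvPolynomial.X_injective h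
  rwa [idx_eq_iff n i j hi hi' hj hj'] at this

lemma eval_pv (n a : ℕ) (f : Fin (2*n+1) → ℂ) :
    eval f (pv n a) = f (idx n (a-2)) * f (idx n (a-1)) + f (idx n (a+1)) * f (idx n (a+2)) := by
  simp [pv, xv_def]

lemma xv_ne_pv (n i a : ℕ) (hi : 1 ≤ i) (hi' : i ≤ 2*n+1) (ha : 3 ≤ a) (ha' : a + 2 ≤ 2*n+1) :
    xv n i ≠ pv n a := by
  intro h
  have h' := congrArg (eval (fun s => if s = idx n i then (1:ℂ) else 0)) h
  simp only [xv_def, eval_X, eval_pv] at h'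
  simp only [idx_eq_iff n (a-2) i (by omega) (by omega) hi hi',
      idx_eq_iff n (a-1) i (by omega) (by omega) hi hi',
      idx_eq_iff n (a+1) i (by omega) (by omega) hi hi',
      idx_eq_iff n (a+2) i (by omega) (by omega) hi hi', if_true] at h'
  split_ifs at h' <;> first | omega | norm_num at h'

lemma pv_ne_pv (n a b : ℕ) (ha1 : 3 ≤ a) (ha2 : a + 2 ≤ 2*n+1) (ha3 : a % 2 = 1)
    (hb1 : 3 ≤ b) (hb2 : b + 2 ≤ 2*n+1) (hb3 : b % 2 = 1) (hab : a ≠ b) :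
    pv n a ≠ pv n b := by
  intro h
  have h' := congrArg (eval (fun s => if s = idx n (a-2) ∨ s = idx n (a-1) then (1:ℂ) else 0)) h
  simp only [eval_pv] at h'
  simp only [idx_eq_iff n (a-2) (a-1) (by omega) (by omega) (by omega) (by omega),
      idx_eq_iff n (a-1) (a-2) (by omega) (by omega) (by omega) (by omega),
      idx_eq_iff n (a+1) (a-2) (by omega) (by omega) (by omega) (by omega),
      idx_eq_iff n (a+1) (a-1) (by omega) (by omega) (by omega) (by omega),
      idx_eq_iff n (a+2) (a-2) (by omega) (by omega) (by omega) (by omega),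
      idx_eq_iff n (a+2) (a-1) (by omega) (by omega) (by omega) (by omega),
      idx_eq_iff n (b-2) (a-2) (by omega) (by omega) (by omega) (by omega),
      idx_eq_iff n (b-2) (a-1) (by omega) (by omega) (by omega) (by omega),
      idx_eq_iff n (b-1) (a-2) (by omega) (by omega) (by omega) (by omega),
      idx_eq_iff n (b-1) (a-1) (by omega) (by omega) (by omega) (by omega),
      idx_eq_iff n (b+1) (a-2) (by omega) (by omega) (by omega) (by omega),
      idx_eq_iff n (b+1) (a-1) (by omega) (by omega) (by omega) (by omega),
      idx_eq_iff n (b+2) (a-2) (by omega) (by omega) (by omega) (by omega),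
      idx_eq_iff n (b+2) (a-1) (by omega) (by omega) (by omega) (by omega),
      true_or, or_true, if_true] at h'
  split_ifs at h' <;> first | omega | norm_num at h'

/-- For every `n ≥ 3`, every Fibonacci subset `S ∈ F_n`, and every `S`-admissible set
`B`, the cardinality of `B` equals `|S ∩ A_n| + (n+1) − |S ∩ (S+4)|`, where
`S+4 = {a+4 : a ∈ S}`. -/
theorem admissible_card (n : ℕ) (hn : 3 ≤ n) (S : Finset ℕ) (hS : IsFib n S)
    (B : Finset (MvPolynomial (Fin (2 * n + 1)) ℂ)) (hB : IsAdmissible n S B) :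
    (B.card : ℤ) =
      ((S ∩ Aset n).card : ℤ) + (n + 1) - ((S ∩ S.image (fun a => a + 4)).card : ℤ) := by
  classical
  obtain ⟨V2, V3, h2, h3, hBdef⟩ := hB
  have hA' : ∀ a, a ∈ Aset' n ↔ (a % 2 = 1 ∧ 3 ≤ a ∧ a ≤ 2*n-1) := by
    intro a
    simp only [Aset', Finset.mem_filter, Finset.mem_range]
    omega
  have hA : ∀ a, a ∈ Aset n ↔ (a % 2 = 1 ∧ 5 ≤ a ∧ a ≤ 2*n-3) := by
    intro a
    simp only [Aset, Finset.mem_filter, hA']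
    omega
  have hSmem : ∀ a ∈ S, a % 2 = 1 ∧ 3 ≤ a ∧ a ≤ 2*n-1 := fun a ha => (hA' a).1 (hS.1 ha)
  have fib : ∀ c, c % 2 = 1 → 3 ≤ c → c + 2 ≤ 2*n-1 → (c ∈ S ∨ c + 2 ∈ S) := by
    intro c h1 h2 h3
    have h := hS.2 ((c-1)/2) (by omega) (by omega)
    have e1 : 2 * ((c-1)/2) + 1 = c := by omega
    have e2 : 2 * ((c-1)/2) + 3 = c + 2 := by omega
    rw [e1, e2] at h
    exact h
  have hxvne : ∀ i j : ℕ, 1 ≤ i → i ≤ 2*n+1 → 1 ≤ j → j ≤ 2*n+1 → i ≠ j →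
      xv n i ≠ xv n j := fun i j a b c d e h => e (xv_inj n i j a b c d h)
  have hT : ∀ a x, x ∈ Tpart n S a →
      (a-2 ∈ S ∧ a+2 ∉ S ∧ x = xv n (a+1)) ∨ (a-2 ∉ S ∧ a+2 ∈ S ∧ x = xv n (a-1)) ∨
      (a-2 ∉ S ∧ a+2 ∉ S ∧ x = pv n a) := by
    intro a x hx
    unfold Tpart at hx
    split_ifs at hx <;> simp at hx <;> tauto
  have hTdisj : ∀ a ∈ Aset n, ∀ b ∈ Aset n, a ≠ b → Disjoint (Tpart n S a) (Tpart n S b) := by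
    intro a ha b hb hab
    obtain ⟨ha1, ha2, ha3⟩ := (hA a).1 ha
    obtain ⟨hb1, hb2, hb3⟩ := (hA b).1 hb
    rw [Finset.disjoint_left]
    intro x hxa hxb
    rcases hT a x hxa with ⟨c1, c2, rfl⟩ | ⟨c1, c2, rfl⟩ | ⟨c1, c2, rfl⟩ <;>
      rcases hT b _ hxb with ⟨d1, d2, he⟩ | ⟨d1, d2, he⟩ | ⟨d1, d2, he⟩
    · have := xv_inj n (a+1) (b+1) (by omega) (by omega) (by omega) (by omega) he; omega
    · have h9 := xv_inj n (a+1) (b-1) (by omega) (by omega) (by omega) (by omega) he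
      have hf := fib a ha1 (by omega) (by omega)
      simp only [show b - 2 = a from by omega] at d1
      tauto
    · exact xv_ne_pv n (a+1) b (by omega) (by omega) (by omega) (by omega) he
    · have h9 := xv_inj n (a-1) (b+1) (by omega) (by omega) (by omega) (by omega) he
      have hf := fib b hb1 (by omega) (by omega)
      simp only [show a - 2 = b from by omega] at c1
      exact d2 (hf.resolve_left c1)
    · have := xv_inj n (a-1) (b-1) (by omega) (by omega) (by omega) (by omega) he; omega
    · exact xv_ne_pv n (a-1) b (by omega) (by omega) (by omega) (by omega) he
    · exact xv_ne_pv n (b+1) a (by omega) (by omega) (by omega) (by omega) he.symm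
    · exact xv_ne_pv n (b-1) a (by omega) (by omega) (by omega) (by omega) he.symm
    · exact pv_ne_pv n a b (by omega) (by omega) ha1 (by omega) (by omega) hb1 hab he
  have hU1mem : ∀ x, x ∈ U1 n S → ∃ i, i ∈ S ∧ x = xv n i := by
    intro x hx
    simp only [U1, Finset.mem_image] at hx
    obtain ⟨i, hi, he⟩ := hx
    exact ⟨i, hi, he.symm⟩
  have hV2 : ∀ x ∈ V2, x = xv n 1 ∨ x = xv n 2 ∨ x = pv n 3 := by
    intro x hx
    rcases h2 with ⟨_, _, rfl⟩ | ⟨_, _, rfl | rfl⟩ | ⟨_, _, rfl⟩ <;> simp at hx <;> tauto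
  have hV3 : ∀ x ∈ V3, x = xv n (2*n) ∨ x = xv n (2*n+1) ∨ x = pv n (2*n-1) := by
    intro x hx
    rcases h3 with ⟨_, _, rfl⟩ | ⟨_, _, rfl | rfl⟩ | ⟨_, _, rfl⟩ <;> simp at hx <;> tauto
  have hU4mem : ∀ x, x ∈ U4 n S → ∃ a, (a % 2 = 1 ∧ 5 ≤ a ∧ a ≤ 2*n-3) ∧
      (x = xv n (a+1) ∨ x = xv n (a-1) ∨ x = pv n a) := by
    intro x hx
    rw [U4, Finset.mem_biUnion] at hx
    obtain ⟨a, haA, hxT⟩ := hx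
    exact ⟨a, (hA a).1 haA, by rcases hT a x hxT with ⟨_,_,h⟩|⟨_,_,h⟩|⟨_,_,h⟩ <;> tauto⟩
  have d12 : Disjoint (U1 n S) V2 := by
    rw [Finset.disjoint_left]
    intro x hx1 hx2
    obtain ⟨i, hiS, rfl⟩ := hU1mem x hx1
    obtain ⟨p1, p2, p3⟩ := hSmem i hiS
    rcases hV2 _ hx2 with he | he | he
    · exact hxvne i 1 (by omega) (by omega) (by omega) (by omega) (by omega) he
    · exact hxvne i 2 (by omega) (by omega) (by omega) (by omega) (by omega) he
    · exact xv_ne_pv n i 3 (by omega) (by omega) (by omega) (by omega) he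
  have d13 : Disjoint (U1 n S) V3 := by
    rw [Finset.disjoint_left]
    intro x hx1 hx3
    obtain ⟨i, hiS, rfl⟩ := hU1mem x hx1
    obtain ⟨p1, p2, p3⟩ := hSmem i hiS
    rcases hV3 _ hx3 with he | he | he
    · exact hxvne i (2*n) (by omega) (by omega) (by omega) (by omega) (by omega) he
    · exact hxvne i (2*n+1) (by omega) (by omega) (by omega) (by omega) (by omega) he
    · exact xv_ne_pv n i (2*n-1) (by omega) (by omega) (by omega) (by omega) he
  have d23 : Disjoint V2 V3 := by
    rw [Finset.disjoint_left]
    intro x hx2 hx3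
    rcases hV2 _ hx2 with h | h | h <;> rcases hV3 _ hx3 with h' | h' | h' <;> rw [h] at h'
    · exact hxvne 1 (2*n) (by omega) (by omega) (by omega) (by omega) (by omega) h'
    · exact hxvne 1 (2*n+1) (by omega) (by omega) (by omega) (by omega) (by omega) h'
    · exact xv_ne_pv n 1 (2*n-1) (by omega) (by omega) (by omega) (by omega) h'
    · exact hxvne 2 (2*n) (by omega) (by omega) (by omega) (by omega) (by omega) h'
    · exact hxvne 2 (2*n+1) (by omega) (by omega) (by omega) (by omega) (by omega) h'
    · exact xv_ne_pv n 2 (2*n-1) (by omega) (by omega) (by omega) (by omega) h'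
    · exact xv_ne_pv n (2*n) 3 (by omega) (by omega) (by omega) (by omega) h'.symm
    · exact xv_ne_pv n (2*n+1) 3 (by omega) (by omega) (by omega) (by omega) h'.symm
    · exact pv_ne_pv n 3 (2*n-1) (by omega) (by omega) (by omega) (by omega) (by omega)
        (by omega) (by omega) h'
  have d14 : Disjoint (U1 n S) (U4 n S) := by
    rw [Finset.disjoint_left]
    intro x hx1 hx4
    obtain ⟨i, hiS, rfl⟩ := hU1mem x hx1
    obtain ⟨p1, p2, p3⟩ := hSmem i hiS
    obtain ⟨a, ⟨q1, q2, q3⟩, he | he | he⟩ := hU4mem _ hx4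
    · exact hxvne i (a+1) (by omega) (by omega) (by omega) (by omega) (by omega) he
    · exact hxvne i (a-1) (by omega) (by omega) (by omega) (by omega) (by omega) he
    · exact xv_ne_pv n i a (by omega) (by omega) (by omega) (by omega) he
  have d24 : Disjoint V2 (U4 n S) := by
    rw [Finset.disjoint_left]
    intro x hx2 hx4
    obtain ⟨a, ⟨q1, q2, q3⟩, hca⟩ := hU4mem _ hx4
    rcases hV2 _ hx2 with h | h | h <;> rcases hca with he | he | he <;> rw [h] at he
    · exact hxvne 1 (a+1) (by omega) (by omega) (by omega) (by omega) (by omega) he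
    · exact hxvne 1 (a-1) (by omega) (by omega) (by omega) (by omega) (by omega) he
    · exact xv_ne_pv n 1 a (by omega) (by omega) (by omega) (by omega) he
    · exact hxvne 2 (a+1) (by omega) (by omega) (by omega) (by omega) (by omega) he
    · exact hxvne 2 (a-1) (by omega) (by omega) (by omega) (by omega) (by omega) he
    · exact xv_ne_pv n 2 a (by omega) (by omega) (by omega) (by omega) he
    · exact xv_ne_pv n (a+1) 3 (by omega) (by omega) (by omega) (by omega) he.symm
    · exact xv_ne_pv n (a-1) 3 (by omega) (by omega) (by omega) (by omega) he.symm
    · exact pv_ne_pv n 3 a (by omega) (by omega) (by omega) (by omega) (by omega) q1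
        (by omega) he
  have d34 : Disjoint V3 (U4 n S) := by
    rw [Finset.disjoint_left]
    intro x hx3 hx4
    obtain ⟨a, ⟨q1, q2, q3⟩, hca⟩ := hU4mem _ hx4
    rcases hV3 _ hx3 with h | h | h <;> rcases hca with he | he | he <;> rw [h] at he
    · exact hxvne (2*n) (a+1) (by omega) (by omega) (by omega) (by omega) (by omega) he
    · exact hxvne (2*n) (a-1) (by omega) (by omega) (by omega) (by omega) (by omega) he
    · exact xv_ne_pv n (2*n) a (by omega) (by omega) (by omega) (by omega) he
    · exact hxvne (2*n+1) (a+1) (by omega) (by omega) (by omega) (by omega) (by omega) he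
    · exact hxvne (2*n+1) (a-1) (by omega) (by omega) (by omega) (by omega) (by omega) he
    · exact xv_ne_pv n (2*n+1) a (by omega) (by omega) (by omega) (by omega) he
    · exact xv_ne_pv n (a+1) (2*n-1) (by omega) (by omega) (by omega) (by omega) he.symm
    · exact xv_ne_pv n (a-1) (2*n-1) (by omega) (by omega) (by omega) (by omega) he.symm
    · exact pv_ne_pv n (2*n-1) a (by omega) (by omega) (by omega) (by omega) (by omega) q1
        (by omega) he
  have hU1card : (U1 n S).card = S.card := by
    apply Finset.card_image_of_injOn
    intro i hi j hj h
    obtain ⟨p1, p2, p3⟩ := hSmem i (Finset.mem_coe.mp hi)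
    obtain ⟨q1, q2, q3⟩ := hSmem j (Finset.mem_coe.mp hj)
    exact xv_inj n i j (by omega) (by omega) (by omega) (by omega) h
  have hc2 : V2.card + (if 3 ∈ S then 1 else 0) = 2 := by
    rcases h2 with ⟨h3m, _, rfl⟩ | ⟨h3m, _, rfl | rfl⟩ | ⟨h3m, _, rfl⟩
    · rw [if_neg h3m, Finset.card_insert_of_notMem (by
        simp only [Finset.mem_singleton]
        exact hxvne 1 2 (by omega) (by omega) (by omega) (by omega) (by omega)),
        Finset.card_singleton]
    · rw [if_pos h3m, Finset.card_singleton]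
    · rw [if_pos h3m, Finset.card_singleton]
    · rw [if_pos h3m, Finset.card_singleton]
  have hc3 : V3.card + (if 2*n-1 ∈ S then 1 else 0) = 2 := by
    rcases h3 with ⟨h3m, _, rfl⟩ | ⟨_, h3m, rfl | rfl⟩ | ⟨h3m, _, rfl⟩
    · rw [if_neg h3m, Finset.card_insert_of_notMem (by
        simp only [Finset.mem_singleton]
        exact hxvne (2*n) (2*n+1) (by omega) (by omega) (by omega) (by omega) (by omega)),
        Finset.card_singleton]
    · rw [if_pos h3m, Finset.card_singleton]
    · rw [if_pos h3m, Finset.card_singleton]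
    · rw [if_pos h3m, Finset.card_singleton]
  have hTcard : ∀ a ∈ Aset n, (Tpart n S a).card =
      if ¬(a-2 ∈ S ∧ a+2 ∈ S) then 1 else 0 := by
    intro a _
    unfold Tpart
    by_cases h1 : a-2 ∈ S <;> by_cases h2 : a+2 ∈ S
    · rw [if_pos h1, if_pos h2, if_neg (by tauto), Finset.card_empty]
    · rw [if_pos h1, if_neg h2, if_pos (by tauto), Finset.card_singleton]
    · rw [if_neg h1, if_pos h2, if_pos (by tauto), Finset.card_singleton]
    · rw [if_neg h1, if_neg h2, if_pos (by tauto), Finset.card_singleton]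
  have hU4card : (U4 n S).card =
      ((Aset n).filter (fun a => ¬(a-2 ∈ S ∧ a+2 ∈ S))).card := by
    rw [U4, Finset.card_biUnion hTdisj, Finset.card_filter]
    exact Finset.sum_congr rfl hTcard
  have hfil : ((Aset n).filter (fun a => a-2 ∈ S ∧ a+2 ∈ S)).card
      + ((Aset n).filter (fun a => ¬(a-2 ∈ S ∧ a+2 ∈ S))).card = (Aset n).card :=
    Finset.card_filter_add_card_filter_not _
  have hAim : Aset n = (Finset.range (n-3)).image (fun j => 2*j+5) := by
    ext a
    rw [hA a]
    simp only [Finset.mem_image, Finset.mem_range]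
    constructor
    · rintro ⟨h1', h2', h3'⟩
      exact ⟨(a-5)/2, by omega, by omega⟩
    · rintro ⟨j, hj, rfl⟩
      omega
  have cA : (Aset n).card = n - 3 := by
    rw [hAim, Finset.card_image_of_injective _ (by
      intro x y h
      simp only [] at h
      omega), Finset.card_range]
  have cD : ((Aset n).filter (fun a => a-2 ∈ S ∧ a+2 ∈ S)).card
      = (S ∩ S.image (fun a => a + 4)).card := by
    apply Finset.card_bij (fun a _ => a + 2)
    · intro a ha
      simp only [Finset.mem_filter] at ha
      obtain ⟨haA, hm1, hm2⟩ := ha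
      obtain ⟨q1, q2, q3⟩ := (hA a).1 haA
      simp only [Finset.mem_inter, Finset.mem_image]
      exact ⟨hm2, a-2, hm1, by omega⟩
    · intro a _ b _ h
      omega
    · intro b hb
      simp only [Finset.mem_inter, Finset.mem_image] at hb
      obtain ⟨hbS, c, hcS, hcb⟩ := hb
      obtain ⟨q1, q2, q3⟩ := hSmem b hbS
      obtain ⟨r1, r2, r3⟩ := hSmem c hcS
      refine ⟨b-2, ?_, by omega⟩
      simp only [Finset.mem_filter]
      refine ⟨(hA _).2 ⟨by omega, by omega, by omega⟩, ?_, ?_⟩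
      · have e : b-2-2 = c := by omega
        rw [e]; exact hcS
      · have e : b-2+2 = b := by omega
        rw [e]; exact hbS
  have hSsplit : S ∩ Aset n = S.filter (fun a => ¬(a = 3 ∨ a = 2*n-1)) := by
    ext a
    simp only [Finset.mem_inter, Finset.mem_filter, hA]
    constructor
    · rintro ⟨h1', h2'⟩
      exact ⟨h1', by omega⟩
    · rintro ⟨h1', h2'⟩
      obtain ⟨q1, q2, q3⟩ := hSmem a h1'
      exact ⟨h1', by omega⟩
  have hfil2 : (S.filter (fun a => a = 3 ∨ a = 2*n-1)).card
      + (S.filter (fun a => ¬(a = 3 ∨ a = 2*n-1))).card = S.card :=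
    Finset.card_filter_add_card_filter_not _
  have hq : (S.filter (fun a => a = 3 ∨ a = 2*n-1)).card
      = (if 3 ∈ S then 1 else 0) + (if 2*n-1 ∈ S then 1 else 0) := by
    rw [Finset.filter_or, Finset.filter_eq', Finset.filter_eq']
    have hne : (3:ℕ) ≠ 2*n-1 := by omega
    split_ifs with u v
    · rw [show ({3} ∪ {2*n-1} : Finset ℕ) = {3, 2*n-1} from rfl,
        Finset.card_insert_of_notMem (by simp [hne]), Finset.card_singleton]
    · simp
    · simp
    · simp
  have cS : (S ∩ Aset n).card
      + ((if 3 ∈ S then 1 else 0) + (if 2*n-1 ∈ S then 1 else 0)) = S.card := by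
    rw [hSsplit, ← hq]
    omega
  subst hBdef
  rw [show (U1 n S ∪ V2 ∪ V3 ∪ U4 n S).card
      = S.card + V2.card + V3.card + (U4 n S).card from by
    rw [Finset.card_union_of_disjoint (by
          rw [Finset.disjoint_union_left, Finset.disjoint_union_left]
          exact ⟨⟨d14, d24⟩, d34⟩),
        Finset.card_union_of_disjoint (by
          rw [Finset.disjoint_union_left]
          exact ⟨d13, d23⟩),
        Finset.card_union_of_disjoint d12, hU1card]]
  rw [hU4card]
  omega
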